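/- arXiv:2602.19464 — 3 statements merged into one kernel-verified Lean document; each statement's English description precedes it below -/
import Mathlib

section
/- For n > k ≥ ℓ' ≥ 2 (with appropriate indices), the sequence h(m,a) = S(m,a)/S(m-1,a-1) is strictly decreasing in a for 2 ≤ a ≤ m; equivalently, S(m,a)·S(m-1,b-1) < S(m-1,a-1)·S(m,b) whenever 2 ≤ b < a ≤ m. -/
/-- Stirling number of the second kind: number of partitions of an `n`-set into
`k` nonempty blocks. -/
def stirling : ℕ → ℕ → ℕ
  | 0, 0 => 1
  | 0, _ + 1 => 0
  | _ + 1, 0 => 0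
  | n + 1, k + 1 => stirling n k + (k + 1) * stirling n (k + 1)

lemma stirling_pos (n k : ℕ) (h1 : 1 ≤ k) (h2 : k ≤ n) : 0 < stirling n k := by
  induction n generalizing k with
  | zero => omega
  | succ m ih =>
    obtain ⟨j, rfl⟩ : ∃ j, k = j + 1 := ⟨k - 1, by omega⟩
    rw [stirling]
    rcases Nat.eq_zero_or_pos j with rj | rj
    · subst rj
      rcases Nat.eq_zero_or_pos m with rm | rm
      · subst rm; simp [stirling]
      · have := ih 1 le_rfl rm
        simp only [Nat.zero_add, Nat.one_mul]
        omega
    · have := ih j rj (by omega)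
      omega

lemma stirling_eq_zero : ∀ n k : ℕ, n < k → stirling n k = 0
  | 0, k + 1, _ => rfl
  | n + 1, k + 1, h => by
    rw [stirling, stirling_eq_zero n k (by omega), stirling_eq_zero n (k + 1) (by omega)]
    simp

/-- core strong log-concavity inequality -/
lemma stirling_core : ∀ n j : ℕ, j + 1 ≤ n →
    (j + 2) * stirling n (j + 2) * stirling n j < (j + 1) * stirling n (j + 1) ^ 2 := by
  intro n
  induction n with
  | zero => omega
  | succ m ih =>
    intro j hj
    rcases Nat.lt_or_ge (j + 1) (m + 1) with hlt | hge
    · -- j + 1 ≤ m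
      rcases j with _ | i
      · -- j = 0
        have h0 : stirling (m + 1) 0 = 0 := rfl
        have h1 : 0 < stirling (m + 1) 1 := stirling_pos (m + 1) 1 le_rfl (by omega)
        rw [h0]
        nlinarith
      · -- j = i + 1
        have hi2 : i + 2 ≤ m := by omega
        set d := stirling m i with hd
        set a := stirling m (i + 1) with ha'
        set b := stirling m (i + 2) with hb'
        set c := stirling m (i + 3) with hc'
        have ea : stirling (m + 1) (i + 1) = d + (i + 1) * a := by rw [stirling]
        have eb : stirling (m + 1) (i + 2) = a + (i + 2) * b := by rw [stirling]
        have ec : stirling (m + 1) (i + 3) = b + (i + 3) * c := by rw [stirling]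
        have h1 : (i + 2) * b * d < (i + 1) * a ^ 2 := ih i (by omega)
        have h2 : (i + 3) * c * a < (i + 2) * b ^ 2 := ih (i + 1) (by omega)
        have ha : 0 < a := stirling_pos m (i + 1) (by omega) (by omega)
        have hb : 0 < b := stirling_pos m (i + 2) (by omega) (by omega)
        have h3 : (i + 3) * c * d ≤ (i + 1) * a * b := by
          have hp : ((i + 3) * c * a) * ((i + 2) * b * d) ≤
              ((i + 2) * b ^ 2) * ((i + 1) * a ^ 2) := Nat.mul_le_mul h2.le h1.le
          have hp' : ((i + 2) * (a * b)) * ((i + 3) * c * d) ≤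
              ((i + 2) * (a * b)) * ((i + 1) * a * b) := by ring_nf; ring_nf at hp; linarith
          exact Nat.le_of_mul_le_mul_left hp' (by positivity)
        rw [ea, eb, ec]
        nlinarith [Nat.mul_le_mul_left (i + 3) h3, Nat.mul_le_mul_left (i + 1) h3,
          sq_nonneg (a + (i + 2) * b), Nat.mul_le_mul_left ((i + 3) * (i + 1)) h2.le,
          mul_pos ha hb]
    · -- j + 1 = m + 1, so j = m
      have hz : stirling (m + 1) (j + 2) = 0 := stirling_eq_zero _ _ (by omega)
      have hp : 0 < stirling (m + 1) (j + 1) := stirling_pos _ _ (by omega) (by omega)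
      rw [hz]
      nlinarith

/-- consecutive case -/
lemma stirling_consec (m k : ℕ) (hk : 2 ≤ k) (hkm : k < m) :
    stirling m (k + 1) * stirling (m - 1) (k - 1) <
      stirling (m - 1) k * stirling m k := by
  obtain ⟨n, rfl⟩ : ∃ n, m = n + 1 := ⟨m - 1, by omega⟩
  obtain ⟨j, rfl⟩ : ∃ j, k = j + 2 := ⟨k - 2, by omega⟩
  simp only [Nat.add_sub_cancel, show j + 2 - 1 = j + 1 from rfl]
  have eb : stirling (n + 1) (j + 2) = stirling n (j + 1) + (j + 2) * stirling n (j + 2) := by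
    rw [stirling]
  have ec : stirling (n + 1) (j + 3) = stirling n (j + 2) + (j + 3) * stirling n (j + 3) := by
    rw [stirling]
  have hcore := stirling_core n (j + 1) (by omega)
  rw [show j + 2 + 1 = j + 3 from rfl, eb, ec]
  nlinarith [hcore]

theorem stmt_12 (m a b : ℕ) (hb : 2 ≤ b) (hba : b < a) (ham : a ≤ m) :
    stirling m a * stirling (m - 1) (b - 1) <
      stirling (m - 1) (a - 1) * stirling m b := by
  induction a with
  | zero => omega
  | succ t ih =>
    rcases Nat.lt_or_ge b t with hbt | hget
    · -- b < t, chain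
      have h1 := ih hbt (by omega)
      have h2 : stirling m (t + 1) * stirling (m - 1) (t - 1) <
          stirling (m - 1) t * stirling m t := stirling_consec m t (by omega) (by omega)
      have ht1 : t + 1 - 1 = t := by omega
      rw [ht1]
      have hB : 0 < stirling m t := stirling_pos m t (by omega) (by omega)
      have hB' : 0 < stirling (m - 1) (t - 1) := stirling_pos (m - 1) (t - 1) (by omega) (by omega)
      have hp : (stirling m (t + 1) * stirling (m - 1) (t - 1)) *
            (stirling m t * stirling (m - 1) (b - 1)) <
          (stirling (m - 1) t * stirling m t) *
            (stirling (m - 1) (t - 1) * stirling m b) :=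
        Nat.mul_lt_mul_of_lt_of_lt h2 h1
      have hp' : (stirling m t * stirling (m - 1) (t - 1)) *
            (stirling m (t + 1) * stirling (m - 1) (b - 1)) <
          (stirling m t * stirling (m - 1) (t - 1)) *
            (stirling (m - 1) t * stirling m b) := by
        ring_nf; ring_nf at hp; linarith
      exact Nat.lt_of_mul_lt_mul_left hp'
    · -- b = t
      have hbt : b = t := by omega
      subst hbt
      have ht1 : b + 1 - 1 = b := by omega
      rw [ht1]
      exact stirling_consec m b hb (by omega)
end

section
/- Let n, k, t be integers with n ≥ k ≥ t+2, and let X be a partition of a subset of [n] into t nonempty blocks with |∪X| < n. Then the number of partitions F of [n] into k blocks with X ⊆ F equals S(n - |∪X|, k - t), which is at most S(n-t, k-t), with equality if and only if every block of X is a singleton. -/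
/-- `P` is a partition of `[n]` into `k` pairwise disjoint nonempty blocks. -/
def IsKPartition (n k : ℕ) (P : Finset (Finset (Fin n))) : Prop :=
  P.card = k ∧ (∀ B ∈ P, B.Nonempty) ∧
    (∀ B ∈ P, ∀ C ∈ P, B ≠ C → Disjoint B C) ∧ P.sup id = Finset.univ

theorem stirling_eq_stirlingSecond : ∀ n k, stirling n k = Nat.stirlingSecond n k
  | 0, 0 | 0, _ + 1 | _ + 1, 0 => rfl
  | n + 1, k + 1 => by
    rw [stirling, Nat.stirlingSecond_succ_succ, stirling_eq_stirlingSecond n k,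
      stirling_eq_stirlingSecond n (k + 1), add_comm]

namespace Nat

theorem stirlingSecond_le_stirlingSecond_succ (n : ℕ) {k : ℕ} (hk : k ≠ 0) :
    stirlingSecond n k ≤ stirlingSecond (n + 1) k := by
  obtain ⟨j, rfl⟩ := exists_eq_succ_of_ne_zero hk
  rw [stirlingSecond_succ_succ]
  nlinarith

theorem stirlingSecond_mono_left {k : ℕ} (hk : k ≠ 0) : Monotone (stirlingSecond · k) :=
  monotone_nat_of_le_succ fun n => stirlingSecond_le_stirlingSecond_succ n hk

theorem stirlingSecond_pos {n k : ℕ} (hk : k ≠ 0) (hkn : k ≤ n) : 0 < stirlingSecond n k :=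
  calc 0 < stirlingSecond k k := by rw [stirlingSecond_self]; exact one_pos
    _ ≤ stirlingSecond n k := stirlingSecond_mono_left hk hkn

theorem stirlingSecond_lt_stirlingSecond_succ {n k : ℕ} (hk : 2 ≤ k) (hkn : k ≤ n + 1) :
    stirlingSecond n k < stirlingSecond (n + 1) k := by
  obtain ⟨j, rfl⟩ := exists_eq_succ_of_ne_zero (by omega : k ≠ 0)
  rw [stirlingSecond_succ_succ]
  have hpos := stirlingSecond_pos (n := n) (k := j) (by omega) (by omega)
  nlinarith

theorem stirlingSecond_lt_stirlingSecond {a b k : ℕ} (hk : 2 ≤ k) (hab : a < b) (hkb : k ≤ b) :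
    stirlingSecond a k < stirlingSecond b k := by
  obtain ⟨c, rfl⟩ := exists_eq_succ_of_ne_zero (by omega : b ≠ 0)
  exact (stirlingSecond_mono_left (by omega) (by omega : a ≤ c)).trans_lt
    (stirlingSecond_lt_stirlingSecond_succ hk hkb)

end Nat

open Finset

section Partitions

variable {α : Type*} [DecidableEq α]

structure IsPartitionOf (s : Finset α) (k : ℕ) (P : Finset (Finset α)) : Prop where
  card_eq : #P = k
  nonempty : ∀ B ∈ P, B.Nonempty
  disjoint : ∀ B ∈ P, ∀ C ∈ P, B ≠ C → Disjoint B C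
  sup_eq : P.sup id = s

open scoped Classical in
noncomputable def partitionsOf (s : Finset α) (k : ℕ) : Finset (Finset (Finset α)) :=
  {P ∈ s.powerset.powerset | IsPartitionOf s k P}

namespace IsPartitionOf

variable {s u : Finset α} {k t : ℕ} {P X : Finset (Finset α)} {B C : Finset α}

theorem subset (hP : IsPartitionOf s k P) (hB : B ∈ P) : B ⊆ s :=
  hP.sup_eq ▸ le_sup (f := id) hB

theorem mem_iff (hP : IsPartitionOf s k P) {x : α} : x ∈ s ↔ ∃ B ∈ P, x ∈ B := by
  rw [← hP.sup_eq, mem_sup]; rfl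

theorem eq_of_mem (hP : IsPartitionOf s k P) (hB : B ∈ P) (hC : C ∈ P) {x : α} (hxB : x ∈ B)
    (hxC : x ∈ C) : B = C := by
  by_contra hBC
  exact disjoint_left.mp (hP.disjoint B hB C hC hBC) hxB hxC

theorem sum_card (hP : IsPartitionOf s k P) : ∑ B ∈ P, #B = #s := by
  rw [← hP.sup_eq, sup_eq_biUnion]; exact (card_biUnion hP.disjoint).symm

theorem card_le (hP : IsPartitionOf s k P) : k ≤ #s := by
  rw [← hP.sum_card, ← hP.card_eq, card_eq_sum_ones]
  exact sum_le_sum fun B hB => card_pos.mpr (hP.nonempty B hB)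

theorem card_eq_iff_forall_card_eq_one (hP : IsPartitionOf s k P) : #s = k ↔ ∀ B ∈ P, #B = 1 := by
  rw [← hP.sum_card, eq_comm, ← hP.card_eq, card_eq_sum_ones, sum_eq_sum_iff_of_le]
  · simp only [eq_comm]
  · exact fun B hB => card_pos.mpr (hP.nonempty B hB)

theorem disjoint_of_disjoint (hP : IsPartitionOf s k P) (hX : IsPartitionOf u t X)
    (hsu : Disjoint s u) : Disjoint P X :=
  disjoint_left.mpr fun B hBP hBX => (hP.nonempty B hBP).ne_empty <|
    disjoint_self.mp (hsu.mono (hP.subset hBP) (hX.subset hBX))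

theorem sdiff (hP : IsPartitionOf s k P) (hX : IsPartitionOf u t X) (hXP : X ⊆ P) :
    IsPartitionOf (s \ u) (k - t) (P \ X) := by
  refine ⟨by rw [card_sdiff_of_subset hXP, hP.card_eq, hX.card_eq],
    fun B hB => hP.nonempty B (mem_sdiff.mp hB).1,
    fun B hB C hC => hP.disjoint B (mem_sdiff.mp hB).1 C (mem_sdiff.mp hC).1, ?_⟩
  ext x
  simp only [mem_sup, id, mem_sdiff, hP.mem_iff, hX.mem_iff]
  constructor
  · rintro ⟨B, ⟨hBP, hBX⟩, hxB⟩
    refine ⟨⟨B, hBP, hxB⟩, fun ⟨C, hCX, hxC⟩ => hBX ?_⟩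
    rwa [hP.eq_of_mem hBP (hXP hCX) hxB hxC]
  · rintro ⟨⟨B, hBP, hxB⟩, hxu⟩
    exact ⟨B, ⟨hBP, fun hBX => hxu ⟨B, hBX, hxB⟩⟩, hxB⟩

theorem union (hP : IsPartitionOf s k P) (hX : IsPartitionOf u t X) (hsu : Disjoint s u) :
    IsPartitionOf (s ∪ u) (k + t) (P ∪ X) := by
  refine ⟨?_, ?_, ?_, by rw [sup_union, hP.sup_eq, hX.sup_eq]; rfl⟩
  · rw [card_union_of_disjoint (hP.disjoint_of_disjoint hX hsu), hP.card_eq, hX.card_eq]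
  · intro B hB
    rcases mem_union.mp hB with hB | hB
    exacts [hP.nonempty B hB, hX.nonempty B hB]
  · intro B hB C hC hBC
    rcases mem_union.mp hB with hBP | hBX <;> rcases mem_union.mp hC with hCP | hCX
    · exact hP.disjoint B hBP C hCP hBC
    · exact hsu.mono (hP.subset hBP) (hX.subset hCX)
    · exact hsu.symm.mono (hX.subset hBX) (hP.subset hCP)
    · exact hX.disjoint B hBX C hCX hBC

end IsPartitionOf

theorem isPartitionOf_singleton {B : Finset α} (hB : B.Nonempty) : IsPartitionOf B 1 {B} :=
  ⟨card_singleton B, by simpa, by simp, sup_singleton⟩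

theorem isPartitionOf_zero_iff {s : Finset α} {P : Finset (Finset α)} :
    IsPartitionOf s 0 P ↔ P = ∅ ∧ s = ∅ := by
  constructor
  · rintro ⟨hP, -, -, rfl⟩
    rw [card_eq_zero.mp hP]
    exact ⟨rfl, sup_empty⟩
  · rintro ⟨rfl, rfl⟩
    exact ⟨rfl, by simp, by simp, sup_empty⟩

theorem mem_partitionsOf {s : Finset α} {k : ℕ} {P : Finset (Finset α)} :
    P ∈ partitionsOf s k ↔ IsPartitionOf s k P := by
  classical
  rw [partitionsOf, mem_filter, and_iff_right_iff_imp]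
  exact fun hP => mem_powerset.mpr fun B hB => mem_powerset.mpr (hP.subset hB)

theorem card_filter_superset_partitionsOf {s u : Finset α} {k t : ℕ} {X : Finset (Finset α)}
    (hX : IsPartitionOf u t X) (hus : u ⊆ s) (htk : t ≤ k) :
    #{P ∈ partitionsOf s k | X ⊆ P} = #(partitionsOf (s \ u) (k - t)) := by
  refine card_bij' (fun P _ => P \ X) (fun Q _ => Q ∪ X) ?_ ?_ ?_ ?_
  · intro P hP
    rw [mem_filter, mem_partitionsOf] at hP
    exact mem_partitionsOf.mpr (hP.1.sdiff hX hP.2)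
  · intro Q hQ
    have hQ' := (mem_partitionsOf.mp hQ).union hX sdiff_disjoint
    rw [sdiff_union_of_subset hus, Nat.sub_add_cancel htk] at hQ'
    exact mem_filter.mpr ⟨mem_partitionsOf.mpr hQ', subset_union_right⟩
  · intro P hP
    exact sdiff_union_of_subset (mem_filter.mp hP).2
  · intro Q hQ
    exact union_sdiff_cancel_right
      ((mem_partitionsOf.mp hQ).disjoint_of_disjoint hX sdiff_disjoint)

theorem card_filter_mem_partitionsOf {s B : Finset α} {k : ℕ} (hB : B.Nonempty) (hBs : B ⊆ s) :
    #{P ∈ partitionsOf s (k + 1) | B ∈ P} = #(partitionsOf (s \ B) k) := by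
  simpa only [singleton_subset_iff, Nat.add_sub_cancel] using
    card_filter_superset_partitionsOf (isPartitionOf_singleton hB) hBs (Nat.le_add_left 1 k)

theorem IsPartitionOf.card_filter_insert_mem {s : Finset α} {a : α} {k : ℕ}
    {P : Finset (Finset α)} (hP : IsPartitionOf (insert a s) k P) (ha : a ∉ s) :
    #{E ∈ s.powerset | insert a E ∈ P} = 1 := by
  obtain ⟨B, hBP, haB⟩ := hP.mem_iff.mp (mem_insert_self a s)
  refine card_eq_one.mpr ⟨B.erase a, eq_singleton_iff_unique_mem.mpr ⟨?_, ?_⟩⟩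
  · refine mem_filter.mpr ⟨mem_powerset.mpr fun x hx => ?_, by rwa [insert_erase haB]⟩
    exact (mem_insert.mp (hP.subset hBP (mem_of_mem_erase hx))).resolve_left (ne_of_mem_erase hx)
  · intro E hE
    obtain ⟨hEs, hEP⟩ := mem_filter.mp hE
    have haE : a ∉ E := fun h => ha (mem_powerset.mp hEs h)
    rw [← hP.eq_of_mem hEP hBP (mem_insert_self a E) haB, erase_insert haE]

theorem sum_card_filter_insert_mem_partitionsOf {s : Finset α} {a : α} (ha : a ∉ s) (k : ℕ) :
    ∑ E ∈ s.powerset, #{P ∈ partitionsOf (insert a s) k | insert a E ∈ P} =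
      #(partitionsOf (insert a s) k) := by
  refine (sum_card_bipartiteAbove_eq_sum_card_bipartiteBelow (fun E P => insert a E ∈ P)).trans ?_
  rw [card_eq_sum_ones]
  exact sum_congr rfl fun P hP => (mem_partitionsOf.mp hP).card_filter_insert_mem ha

theorem sum_card_filter_mem_partitionsOf (s : Finset α) (k : ℕ) :
    ∑ E ∈ s.powerset.erase ∅, #{P ∈ partitionsOf s k | E ∈ P} = k * #(partitionsOf s k) := by
  refine (sum_card_bipartiteAbove_eq_sum_card_bipartiteBelow (· ∈ ·)).trans ?_
  rw [mul_comm, ← smul_eq_mul, ← sum_const]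
  refine sum_congr rfl fun P hP => ?_
  have hP := mem_partitionsOf.mp hP
  rw [bipartiteBelow, filter_mem_eq_inter, inter_eq_right.mpr, hP.card_eq]
  exact fun B hB => mem_erase.mpr ⟨(hP.nonempty B hB).ne_empty, mem_powerset.mpr (hP.subset hB)⟩

theorem card_partitionsOf_insert_succ {s : Finset α} {a : α} (ha : a ∉ s) (k : ℕ) :
    #(partitionsOf (insert a s) (k + 1)) =
      (k + 1) * #(partitionsOf s (k + 1)) + #(partitionsOf s k) :=
  calc #(partitionsOf (insert a s) (k + 1))
    _ = ∑ E ∈ s.powerset, #{P ∈ partitionsOf (insert a s) (k + 1) | insert a E ∈ P} :=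
      (sum_card_filter_insert_mem_partitionsOf ha _).symm
    _ = ∑ E ∈ s.powerset, #(partitionsOf (s \ E) k) := sum_congr rfl fun E hE => by
      rw [card_filter_mem_partitionsOf (insert_nonempty a E)
        (insert_subset_insert a (mem_powerset.mp hE)), insert_sdiff_insert,
        sdiff_insert_of_notMem ha]
    _ = ∑ E ∈ s.powerset.erase ∅, #(partitionsOf (s \ E) k) + #(partitionsOf s k) := by
      rw [← add_sum_erase _ _ (empty_mem_powerset s), sdiff_empty, add_comm]
    _ = ∑ E ∈ s.powerset.erase ∅, #{P ∈ partitionsOf s (k + 1) | E ∈ P} + #(partitionsOf s k) := by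
      congr 1
      refine sum_congr rfl fun E hE => (card_filter_mem_partitionsOf ?_ ?_).symm
      exacts [nonempty_iff_ne_empty.mpr (ne_of_mem_erase hE), mem_powerset.mp (mem_of_mem_erase hE)]
    _ = (k + 1) * #(partitionsOf s (k + 1)) + #(partitionsOf s k) := by
      rw [sum_card_filter_mem_partitionsOf]

theorem card_partitionsOf (s : Finset α) (k : ℕ) :
    #(partitionsOf s k) = Nat.stirlingSecond #s k := by
  induction s using Finset.induction_on generalizing k with
  | empty =>
    cases k with
    | zero =>
      exact card_eq_one.mpr ⟨∅, ext fun P => by simp [mem_partitionsOf, isPartitionOf_zero_iff]⟩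
    | succ k =>
      refine card_eq_zero.mpr (eq_empty_iff_forall_notMem.mpr fun P hP => ?_)
      simpa using (mem_partitionsOf.mp hP).card_le
  | insert a s ha ih =>
    rw [card_insert_of_notMem ha]
    cases k with
    | zero =>
      refine card_eq_zero.mpr (eq_empty_iff_forall_notMem.mpr fun P hP => ?_)
      exact insert_ne_empty a s (isPartitionOf_zero_iff.mp (mem_partitionsOf.mp hP)).2
    | succ k =>
      rw [card_partitionsOf_insert_succ ha, ih, ih, Nat.stirlingSecond_succ_succ]

end Partitions

theorem isKPartition_iff_isPartitionOf_univ {n k : ℕ} {P : Finset (Finset (Fin n))} :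
    IsKPartition n k P ↔ IsPartitionOf univ k P :=
  ⟨fun ⟨h₁, h₂, h₃, h₄⟩ => ⟨h₁, h₂, h₃, h₄⟩, fun ⟨h₁, h₂, h₃, h₄⟩ => ⟨h₁, h₂, h₃, h₄⟩⟩

theorem stmt_14_general (n k t : ℕ) (hkt : t + 2 ≤ k) (hnk : k ≤ n)
    (X : Finset (Finset (Fin n))) (hXcard : X.card = t)
    (hXne : ∀ B ∈ X, B.Nonempty)
    (hXdisj : ∀ B ∈ X, ∀ C ∈ X, B ≠ C → Disjoint B C) :
    {F : Finset (Finset (Fin n)) | IsKPartition n k F ∧ X ⊆ F}.ncard =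
        stirling (n - (X.sup id).card) (k - t) ∧
      stirling (n - (X.sup id).card) (k - t) ≤ stirling (n - t) (k - t) ∧
      (stirling (n - (X.sup id).card) (k - t) = stirling (n - t) (k - t) ↔
        ∀ B ∈ X, B.card = 1) := by
  have hX : IsPartitionOf (X.sup id) t X := ⟨hXcard, hXne, hXdisj, rfl⟩
  have hset : {F : Finset (Finset (Fin n)) | IsKPartition n k F ∧ X ⊆ F} =
      ↑{F ∈ partitionsOf (univ : Finset (Fin n)) k | X ⊆ F} := by
    ext F
    simp only [coe_filter, mem_partitionsOf, Set.mem_ofPred_eq, isKPartition_iff_isPartitionOf_univ]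
  have htu : t ≤ #(X.sup id) := hX.card_le
  simp only [stirling_eq_stirlingSecond, ← hX.card_eq_iff_forall_card_eq_one]
  refine ⟨?_, Nat.stirlingSecond_mono_left (by omega) (by omega), fun heq => ?_, fun h => by rw [h]⟩
  · rw [hset, Set.ncard_coe_finset, card_filter_superset_partitionsOf hX (subset_univ _) (by omega),
      card_partitionsOf, card_univ_sdiff, Fintype.card_fin]
  · by_contra hne
    exact (Nat.stirlingSecond_lt_stirlingSecond (by omega) (by omega) (by omega)).ne heq

theorem stmt_14 (n k t : ℕ) (hkt : t + 2 ≤ k) (hnk : k ≤ n)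
    (X : Finset (Finset (Fin n))) (hXcard : X.card = t)
    (hXne : ∀ B ∈ X, B.Nonempty)
    (hXdisj : ∀ B ∈ X, ∀ C ∈ X, B ≠ C → Disjoint B C)
    (hXsub : (X.sup id).card < n) :
    {F : Finset (Finset (Fin n)) | IsKPartition n k F ∧ X ⊆ F}.ncard =
        stirling (n - (X.sup id).card) (k - t) ∧
      stirling (n - (X.sup id).card) (k - t) ≤ stirling (n - t) (k - t) ∧
      (stirling (n - (X.sup id).card) (k - t) = stirling (n - t) (k - t) ↔
        ∀ B ∈ X, B.card = 1) :=
  stmt_14_general n k t hkt hnk X hXcard hXne hXdisj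
end

section
/- Let k ≥ t+2 and n ≥ L(k,t) = (t+1) + (k-t+1)·log₂((t+1)(k-t+1)). Then (t+1)·S(n-t,k-t) - t·S(n-t-1,k-t-1) > (t + 3/5)·S(n-t,k-t). -/
/-- `L(k,t) = (t+1) + (k-t+1)·log₂((t+1)(k-t+1))`. -/
noncomputable def Lfun (k t : ℕ) : ℝ :=
  ((t : ℝ) + 1) + ((k : ℝ) - t + 1) * Real.logb 2 (((t : ℝ) + 1) * ((k : ℝ) - t + 1))

open Finset Real
open scoped Nat

theorem sum_descFactorial_mul_stirling (a b : ℕ) :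
    ∑ i ∈ range (b + 1), b.descFactorial i * stirling a i = b ^ a := by
  induction a with
  | zero => simp [sum_range_succ', stirling]
  | succ a ih =>
    have shift_down : ∑ i ∈ range b, b.descFactorial i * (b - i) * stirling a i =
        ∑ i ∈ range (b + 1), b.descFactorial i * (b - i) * stirling a i := by
      simp [sum_range_succ]
    have shift_up : ∑ i ∈ range b, b.descFactorial (i + 1) * (i + 1) * stirling a (i + 1) =
        ∑ i ∈ range (b + 1), b.descFactorial i * i * stirling a i := by
      simp [sum_range_succ' _ b]
    calc ∑ i ∈ range (b + 1), b.descFactorial i * stirling (a + 1) i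
        = ∑ i ∈ range b, (b.descFactorial i * (b - i) * stirling a i +
            b.descFactorial (i + 1) * (i + 1) * stirling a (i + 1)) := by
          simp only [sum_range_succ' _ b, stirling, Nat.descFactorial_succ, mul_zero, add_zero]
          exact sum_congr rfl fun i _ => by ring
      _ = ∑ i ∈ range (b + 1), b * (b.descFactorial i * stirling a i) := by
          rw [sum_add_distrib, shift_down, shift_up, ← sum_add_distrib]
          refine sum_congr rfl fun i hi => ?_
          have hbi : b - i + i = b := Nat.sub_add_cancel (Nat.lt_succ_iff.mp (mem_range.mp hi))
          calc _ = (b - i + i) * (b.descFactorial i * stirling a i) := by ring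
            _ = _ := by rw [hbi]
      _ = b ^ (a + 1) := by rw [← mul_sum, ih, pow_succ, mul_comm]

theorem factorial_mul_stirling_le_pow (a b : ℕ) : b ! * stirling a b ≤ b ^ a := by
  rw [← sum_descFactorial_mul_stirling a b, sum_range_succ, Nat.descFactorial_self]
  exact Nat.le_add_left _ _

theorem succ_descFactorial_le_mul_descFactorial {b i : ℕ} (hi : i ≤ b) :
    (b + 1).descFactorial i ≤ (b + 1) * b.descFactorial i := by
  cases i with
  | zero => simp
  | succ i =>
    rw [Nat.succ_descFactorial_succ, Nat.descFactorial_succ]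
    gcongr
    exact Nat.le_mul_of_pos_left _ (by omega)

theorem pow_le_factorial_mul_stirling_add_pow (a b : ℕ) :
    (b + 1) ^ a ≤ b ! * stirling (a + 1) (b + 1) + b ^ (a + 1) := by
  have h : (b + 1) ^ (a + 1) ≤ (b + 1) ! * stirling (a + 1) (b + 1) + (b + 1) * b ^ (a + 1) := by
    rw [← sum_descFactorial_mul_stirling (a + 1) (b + 1), sum_range_succ, Nat.descFactorial_self,
      add_comm, ← sum_descFactorial_mul_stirling (a + 1) b, mul_sum]
    refine Nat.add_le_add_left (sum_le_sum fun i hi => ?_) _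
    rw [← mul_assoc]
    exact Nat.mul_le_mul_right _
      (succ_descFactorial_le_mul_descFactorial (Nat.lt_succ_iff.mp (mem_range.mp hi)))
  rw [pow_succ', Nat.factorial_succ, mul_assoc, ← mul_add] at h
  exact Nat.le_of_mul_le_mul_left h b.succ_pos

theorem mul_stirling_lt_stirling_succ_succ {C : ℝ} (hC : 0 ≤ C) {a b : ℕ}
    (h : (b : ℝ) ^ a * (C + b) < ((b : ℝ) + 1) ^ a) :
    C * stirling a b < stirling (a + 1) (b + 1) := by
  have upper : (b ! : ℝ) * stirling a b ≤ (b : ℝ) ^ a := by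
    exact_mod_cast factorial_mul_stirling_le_pow a b
  have lower : ((b : ℝ) + 1) ^ a ≤ b ! * stirling (a + 1) (b + 1) + (b : ℝ) ^ (a + 1) := by
    exact_mod_cast pow_le_factorial_mul_stirling_add_pow a b
  have hfac : (0 : ℝ) < b ! := by exact_mod_cast b.factorial_pos
  refine lt_of_mul_lt_mul_left ?_ hfac.le
  calc (b ! : ℝ) * (C * stirling a b) = C * (b ! * stirling a b) := by ring
    _ ≤ C * (b : ℝ) ^ a := mul_le_mul_of_nonneg_left upper hC
    _ < ((b : ℝ) + 1) ^ a - (b : ℝ) ^ (a + 1) := by rw [pow_succ]; linarith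
    _ ≤ b ! * stirling (a + 1) (b + 1) := by linarith

theorem pow_mul_le_succ_pow_of_mul_logb_le {b p : ℕ} (hb : 0 < b) {x : ℝ} (hx : 0 < x)
    (h : b * logb 2 x ≤ p) : (b : ℝ) ^ p * x ≤ ((b : ℝ) + 1) ^ p := by
  have hb' : (0 : ℝ) < b := by exact_mod_cast hb
  set c : ℝ := 1 + 1 / (b : ℝ)
  have two_le : 2 ≤ c ^ b := by
    have := one_add_mul_le_pow (show (-2 : ℝ) ≤ 1 / b by linarith [one_div_pos.mpr hb']) b
    rw [mul_one_div_cancel hb'.ne'] at this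
    linarith
  have log_two_le : log 2 ≤ b * log c := by
    rw [← Real.log_pow]; exact Real.log_le_log two_pos two_le
  have hlog_le : b * log x ≤ b * (p * log c) := by
    calc b * log x = b * logb 2 x * log 2 := by
          rw [logb, mul_assoc, div_mul_cancel₀ _ (Real.log_pos one_lt_two).ne']
      _ ≤ p * log 2 := mul_le_mul_of_nonneg_right h (Real.log_nonneg one_le_two)
      _ ≤ p * (b * log c) := mul_le_mul_of_nonneg_left log_two_le p.cast_nonneg
      _ = b * (p * log c) := by ring
  have hxc : x ≤ c ^ p := by
    rw [← Real.log_le_log_iff hx (by positivity), Real.log_pow]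
    exact le_of_mul_le_mul_left hlog_le hb'
  calc (b : ℝ) ^ p * x ≤ (b : ℝ) ^ p * c ^ p := by gcongr
    _ = ((b : ℝ) + 1) ^ p := by rw [← mul_pow]; congr 1; simp only [c]; field_simp

theorem stmt_18_general (n k t : ℕ) (hkt : t + 2 ≤ k)
    (hn : (n : ℝ) ≥ Lfun k t) :
    ((t : ℝ) + 1) * stirling (n - t) (k - t) - t * stirling (n - t - 1) (k - t - 1) >
      ((t : ℝ) + 3 / 5) * stirling (n - t) (k - t) := by
  obtain ⟨b, rfl⟩ : ∃ b, k = t + (b + 1) := ⟨k - t - 1, by omega⟩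
  have hb : 0 < b := by omega
  have hk : ((t + (b + 1) : ℕ) : ℝ) - t + 1 = b + 2 := by push_cast; ring
  rw [Lfun, hk] at hn
  set x : ℝ := ((t : ℝ) + 1) * (b + 2)
  have hx : 1 ≤ x :=
    one_le_mul_of_one_le_of_one_le (by simp) (by linarith [b.cast_nonneg (α := ℝ)])
  have hlog : 0 ≤ logb 2 x := logb_nonneg one_lt_two hx
  have hnt : t + 1 ≤ n := Nat.cast_le (α := ℝ) |>.mp (by push_cast; nlinarith)
  obtain ⟨p, rfl⟩ : ∃ p, n = t + (p + 1) := ⟨n - t - 1, by omega⟩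
  have hp : b * logb 2 x ≤ p := by push_cast at hn; nlinarith
  have hC : (b : ℝ) ^ p * (5 / 2 * t + b) < ((b : ℝ) + 1) ^ p := by
    have hxC : 5 / 2 * (t : ℝ) + b < x := by
      have : (1 : ℝ) ≤ b := by exact_mod_cast hb
      nlinarith
    calc (b : ℝ) ^ p * (5 / 2 * t + b) < (b : ℝ) ^ p * x := by gcongr
      _ ≤ ((b : ℝ) + 1) ^ p := pow_mul_le_succ_pow_of_mul_logb_le hb (by linarith) hp
  have hS := mul_stirling_lt_stirling_succ_succ (by positivity) hC
  simp only [Nat.add_sub_cancel_left, Nat.add_sub_cancel]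
  linarith

theorem stmt_18 (n k t : ℕ) (ht : 1 ≤ t) (hkt : t + 2 ≤ k)
    (hn : (n : ℝ) ≥ Lfun k t) :
    ((t : ℝ) + 1) * stirling (n - t) (k - t) - t * stirling (n - t - 1) (k - t - 1) >
      ((t : ℝ) + 3 / 5) * stirling (n - t) (k - t) :=
  stmt_18_general n k t hkt hn
end
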